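/- Every brick constructed from a boundedly complete normalized basis with finite extreme radius is compact. -/

import Mathlib

/-!
Write `Sₙ a = ∑_{k<n} aₖ eₖ` and let `x₀` be an extreme point of the brick. For every coefficient
sequence `a` in the box `∏ [-εₖ, εₖ]`, the vector `Sₙ a + (x₀ - Sₙ x₀)` lies in the brick and
agrees with `x₀` from the `n`-th coordinate on, so it is a convex combination of extreme points
(split one coordinate at a time) and has norm at most the extreme radius. Hence the partial sums
`Sₙ a` are uniformly bounded on the box, and bounded completeness makes every `∑ aₖ eₖ` converge.
A gliding hump argument upgrades this to uniform convergence on the box, so `a ↦ ∑ aₖ eₖ` is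
continuous on the compact box, and the brick is a closed subset of its image.
-/

open Filter Topology

/-- A (Schauder) basis of a normed space, with biorthogonal coefficient functionals `f`. -/
structure SchauderBasis' (X : Type*) [NormedAddCommGroup X] [NormedSpace ℝ X] where
  e : ℕ → X
  f : ℕ → X →L[ℝ] ℝ
  biorth : ∀ i j, f i (e j) = if i = j then 1 else 0
  expansion : ∀ x : X,
    Tendsto (fun N => ∑ n ∈ Finset.range N, f n x • e n) atTop (𝓝 x)

/-- The brick corresponding to a basis `B` and half-heights `ε`. -/
def brick {X : Type*} [NormedAddCommGroup X] [NormedSpace ℝ X]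
    (B : SchauderBasis' X) (ε : ℕ → ℝ) : Set X :=
  {x | ∀ n, |B.f n x| ≤ ε n}

/-- A basis is boundedly complete if every series with bounded partial sums converges. -/
def SchauderBasis'.BoundedlyComplete {X : Type*} [NormedAddCommGroup X] [NormedSpace ℝ X]
    (B : SchauderBasis' X) : Prop :=
  ∀ a : ℕ → ℝ, (∃ C : ℝ, ∀ N, ‖∑ n ∈ Finset.range N, a n • B.e n‖ ≤ C) →
    ∃ s : X, Tendsto (fun N => ∑ n ∈ Finset.range N, a n • B.e n) atTop (𝓝 s)

theorem Nat.findGreatest_eq_of_strictMono {M : ℕ → ℕ} (hM : StrictMono M) {k n : ℕ}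
    (hk : M k ≤ n) (hn : n < M (k + 1)) : Nat.findGreatest (fun j => M j ≤ n) n = k := by
  rw [Nat.findGreatest_eq_iff]
  refine ⟨(hM.id_le k).trans hk, fun _ => hk, fun j hkj _ hj => ?_⟩
  exact (hn.trans_le (hM.monotone hkj)).not_ge hj

theorem exists_mem_pi_eqOn_Ico {α : Type*} {s : ℕ → Set α} {M : ℕ → ℕ} (hM : StrictMono M)
    (x : ℕ → ℕ → α) (hx : ∀ k, x k ∈ Set.univ.pi s) :
    ∃ b ∈ Set.univ.pi s, ∀ k, Set.EqOn b (x k) (Set.Ico (M k) (M (k + 1))) := by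
  classical
  refine ⟨fun n => x (Nat.findGreatest (fun j => M j ≤ n) n) n, fun n _ => hx _ n trivial,
    fun k n hn => ?_⟩
  simp only
  rw [Nat.findGreatest_eq_of_strictMono hM hn.1 hn.2]

theorem dist_sum_range_eq_of_eqOn {X : Type*} [SeminormedAddCommGroup X] {f g : ℕ → X}
    {L U p q : ℕ} (hfg : Set.EqOn f g (Set.Ico L U)) (hp : p ∈ Set.Icc L U)
    (hq : q ∈ Set.Icc L U) :
    dist (∑ n ∈ Finset.range p, f n) (∑ n ∈ Finset.range q, f n)
      = dist (∑ n ∈ Finset.range p, g n) (∑ n ∈ Finset.range q, g n) := by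
  have hsplit : ∀ (h : ℕ → X) (r : ℕ), L ≤ r →
      ∑ n ∈ Finset.range r, h n = ∑ n ∈ Finset.range L, h n + ∑ n ∈ Finset.Ico L r, h n :=
    fun h r hr => (Finset.sum_range_add_sum_Ico h hr).symm
  have hIco : ∀ r ∈ Set.Icc L U, ∑ n ∈ Finset.Ico L r, f n = ∑ n ∈ Finset.Ico L r, g n :=
    fun r hr => Finset.sum_congr rfl fun n hn => by
      obtain ⟨hLn, hnr⟩ := Finset.mem_Ico.1 hn
      exact hfg ⟨hLn, hnr.trans_le hr.2⟩
  rw [hsplit f p hp.1, hsplit f q hq.1, hsplit g p hp.1, hsplit g q hq.1, dist_add_left,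
    dist_add_left, hIco p hp, hIco q hq]

theorem uniformCauchySeqOn_sum_range_pi {α X : Type*} [SeminormedAddCommGroup X]
    (v : ℕ → α → X) (s : ℕ → Set α)
    (h : ∀ a ∈ Set.univ.pi s, CauchySeq fun N => ∑ n ∈ Finset.range N, v n (a n)) :
    UniformCauchySeqOn (fun N a => ∑ n ∈ Finset.range N, v n (a n)) atTop (Set.univ.pi s) := by
  by_contra hcon
  simp only [Metric.uniformCauchySeqOn_iff, not_forall, not_exists, not_lt] at hcon
  obtain ⟨δ, hδ, hbad⟩ := hcon
  choose p hp q hq a ha hpq using hbad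
  -- Gliding hump: splice the bad blocks of `a (M k)` into a single `b`, whose sums are not Cauchy.
  let M : ℕ → ℕ := fun k => Nat.rec 0 (fun _ m => max (p m) (q m) + 1) k
  have hM : StrictMono M := strictMono_nat_of_lt_succ fun k =>
    Nat.lt_succ_of_le ((hp (M k)).trans (le_max_left _ _))
  obtain ⟨b, hb, hba⟩ := exists_mem_pi_eqOn_Ico hM (fun k => a (M k)) fun k => ha (M k)
  obtain ⟨N, hN⟩ := Metric.cauchySeq_iff.1 (h b hb) δ hδ
  have hblock : ∀ r, r ∈ ({p (M N), q (M N)} : Set ℕ) → r ∈ Set.Icc (M N) (M (N + 1)) := by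
    rintro r (rfl | rfl)
    · exact ⟨hp _, (le_max_left _ _).trans (Nat.le_succ _)⟩
    · exact ⟨hq _, (le_max_right _ _).trans (Nat.le_succ _)⟩
  have hsame := dist_sum_range_eq_of_eqOn (f := fun n => v n (b n))
    (g := fun n => v n (a (M N) n))
    (fun n hn => congrArg (v n) (hba N hn)) (hblock _ (.inl rfl)) (hblock _ (.inr rfl))
  have hlt := hN _ ((hM.id_le N).trans (hp _)) _ ((hM.id_le N).trans (hq _))
  exact (hpq (M N)).not_gt (hsame ▸ hlt)

namespace SchauderBasis'

variable {X : Type*} [NormedAddCommGroup X] [NormedSpace ℝ X] (B : SchauderBasis' X)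

theorem f_add_smul_e (x : X) (c : ℝ) (k j : ℕ) :
    B.f j (x + c • B.e k) = B.f j x + if j = k then c else 0 := by
  rw [map_add, map_smul, B.biorth, smul_eq_mul, mul_ite, mul_one, mul_zero]

theorem f_sum_range_smul_e (a : ℕ → ℝ) (N j : ℕ) :
    B.f j (∑ n ∈ Finset.range N, a n • B.e n) = if j < N then a j else 0 := by
  simp only [map_sum, map_smul, B.biorth, smul_eq_mul, mul_ite, mul_one, mul_zero,
    Finset.sum_ite_eq, Finset.mem_range]

theorem isClosed_brick (ε : ℕ → ℝ) : IsClosed (brick B ε) := by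
  simp only [brick, Set.ofPred_forall]
  exact isClosed_iInter fun n => isClosed_le (B.f n).continuous.abs continuous_const

theorem norm_le_of_mem_brick_of_abs_f_eq_of_le {ε : ℕ → ℝ} {C : ℝ}
    (hC : ∀ x, (∀ n, |B.f n x| = ε n) → ‖x‖ ≤ C) (k : ℕ) {y : X} (hy : y ∈ brick B ε)
    (hyk : ∀ n, k ≤ n → |B.f n y| = ε n) : ‖y‖ ≤ C := by
  induction k generalizing y with
  | zero => exact hC y fun n => hyk n n.zero_le
  | succ k ih =>
    have hfk := abs_le.1 (hy k)
    obtain ⟨s, t, hs, ht, hst, hsum⟩ : B.f k y ∈ segment ℝ (-ε k) (ε k) := by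
      rw [segment_eq_Icc (by linarith)]
      exact hfk
    let z : ℝ → X := fun c => y + (c - B.f k y) • B.e k
    have hz : ∀ c, |c| = ε k → ‖z c‖ ≤ C := by
      intro c hc
      have hcoef : ∀ n, B.f n (z c) = if n = k then c else B.f n y := by
        intro n
        simp only [z, f_add_smul_e]
        split_ifs with hn <;> simp [hn]
      refine ih (fun n => ?_) fun n hn => ?_
      · rw [hcoef]
        split_ifs with hn
        · exact hn ▸ hc.le
        · exact hy n
      · rw [hcoef]
        split_ifs with hnk
        · exact hnk ▸ hc
        · exact hyk n (Nat.lt_of_le_of_ne hn (Ne.symm hnk))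
    have hε : 0 ≤ ε k := by linarith
    have hcancel : s * (-ε k - B.f k y) + t * (ε k - B.f k y) = 0 := by
      rw [← hsum, smul_eq_mul, smul_eq_mul]
      linear_combination (-(s * -ε k + t * ε k)) * hst
    have hyz : y = s • z (-ε k) + t • z (ε k) := by
      calc y = (s + t) • y + (s * (-ε k - B.f k y) + t * (ε k - B.f k y)) • B.e k := by
            rw [hst, hcancel, one_smul, zero_smul, add_zero]
        _ = s • z (-ε k) + t • z (ε k) := by
            simp only [z, smul_add, smul_smul, add_smul]
            abel
    calc ‖y‖ ≤ s * ‖z (-ε k)‖ + t * ‖z (ε k)‖ := by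
          rw [hyz]
          refine (norm_add_le _ _).trans_eq ?_
          rw [norm_smul, norm_smul, Real.norm_of_nonneg hs, Real.norm_of_nonneg ht]
      _ ≤ s * C + t * C := by
          gcongr
          · exact hz _ (by rw [abs_neg, abs_of_nonneg hε])
          · exact hz _ (abs_of_nonneg hε)
      _ = C := by rw [← add_mul, hst, one_mul]

theorem exists_forall_norm_sum_range_le {ε : ℕ → ℝ} (hext : ∃ x₀ : X, ∀ n, |B.f n x₀| = ε n)
    (hfin : BddAbove {c : ℝ | ∃ x₀ : X, (∀ n, |B.f n x₀| = ε n) ∧ c = ‖x₀‖}) :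
    ∃ D, ∀ a ∈ Set.univ.pi (fun n => Set.Icc (-ε n) (ε n)), ∀ N,
      ‖∑ n ∈ Finset.range N, a n • B.e n‖ ≤ D := by
  obtain ⟨x₀, hx₀⟩ := hext
  obtain ⟨C, hC⟩ := hfin
  let r : ℕ → X := fun N => x₀ - ∑ n ∈ Finset.range N, B.f n x₀ • B.e n
  obtain ⟨D, hD⟩ : BddAbove (Set.range fun N => ‖r N‖) := by
    refine Tendsto.bddAbove_range (a := 0) ?_
    simpa [r] using ((B.expansion x₀).const_sub x₀).norm
  refine ⟨C + D, fun a ha N => ?_⟩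
  have hcoef : ∀ j, B.f j (∑ n ∈ Finset.range N, a n • B.e n + r N)
      = if j < N then a j else B.f j x₀ := by
    intro j
    simp only [r, map_add, map_sub, f_sum_range_smul_e]
    split_ifs <;> ring
  have hy : ‖∑ n ∈ Finset.range N, a n • B.e n + r N‖ ≤ C := by
    refine B.norm_le_of_mem_brick_of_abs_f_eq_of_le (fun x hx => hC ⟨x, hx, rfl⟩) N
      (fun j => ?_) fun j hj => ?_
    · rw [hcoef]
      split_ifs
      · exact abs_le.2 (ha j trivial)
      · exact (hx₀ j).le
    · rw [hcoef, if_neg (not_lt.2 hj), hx₀]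
  calc ‖∑ n ∈ Finset.range N, a n • B.e n‖
      = ‖(∑ n ∈ Finset.range N, a n • B.e n + r N) - r N‖ := by rw [add_sub_cancel_right]
    _ ≤ C + D := (norm_sub_le _ _).trans (add_le_add hy (hD ⟨N, rfl⟩))

theorem isCompact_brick_of_boundedlyComplete (hbc : B.BoundedlyComplete) {ε : ℕ → ℝ}
    (hbdd : ∃ D, ∀ a ∈ Set.univ.pi (fun n => Set.Icc (-ε n) (ε n)), ∀ N,
      ‖∑ n ∈ Finset.range N, a n • B.e n‖ ≤ D) :
    IsCompact (brick B ε) := by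
  obtain ⟨D, hD⟩ := hbdd
  set box := Set.univ.pi fun n => Set.Icc (-ε n) (ε n)
  let S : ℕ → (ℕ → ℝ) → X := fun N a => ∑ n ∈ Finset.range N, a n • B.e n
  let sum : (ℕ → ℝ) → X := fun a => limUnder atTop (S · a)
  have hconv : ∀ a ∈ box, ∃ x, Tendsto (S · a) atTop (𝓝 x) := fun a ha => hbc a ⟨D, hD a ha⟩
  have hunif : TendstoUniformlyOn S sum atTop box :=
    (uniformCauchySeqOn_sum_range_pi (fun n c => c • B.e n) _ fun a ha =>
      (hconv a ha).choose_spec.cauchySeq).tendstoUniformlyOn_of_tendsto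
        fun a ha => tendsto_nhds_limUnder (hconv a ha)
  have hcont : ContinuousOn sum box :=
    hunif.continuousOn (Frequently.of_forall fun N => by fun_prop)
  refine ((isCompact_univ_pi fun n => isCompact_Icc).image_of_continuousOn hcont).of_isClosed_subset
    (B.isClosed_brick ε) fun x hx => ?_
  exact ⟨fun n => B.f n x, fun n _ => abs_le.1 (hx n), (B.expansion x).limUnder_eq⟩

end SchauderBasis'

theorem stmt13_general (X : Type*) [NormedAddCommGroup X] [NormedSpace ℝ X]
    (B : SchauderBasis' X) (hbc : B.BoundedlyComplete)
    (ε : ℕ → ℝ)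
    (hext : ∃ x₀ : X, ∀ n, |B.f n x₀| = ε n)
    (hfin : BddAbove {c : ℝ | ∃ x₀ : X, (∀ n, |B.f n x₀| = ε n) ∧ c = ‖x₀‖}) :
    IsCompact (brick B ε) :=
  B.isCompact_brick_of_boundedlyComplete hbc (B.exists_forall_norm_sum_range_le hext hfin)

/-- A boundedly complete brick with finite extreme radius (there is an extreme point,
i.e. a point `x₀` with `|B.f n x₀| = ε n` for all `n`, and the norms of extreme points
are bounded above) is compact. -/
theorem stmt13 (X : Type*) [NormedAddCommGroup X] [NormedSpace ℝ X] [CompleteSpace X]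
    (B : SchauderBasis' X) (hnorm : ∀ n, ‖B.e n‖ = 1) (hbc : B.BoundedlyComplete)
    (ε : ℕ → ℝ) (hε : ∀ n, 0 ≤ ε n)
    (hext : ∃ x₀ : X, ∀ n, |B.f n x₀| = ε n)
    (hfin : BddAbove {c : ℝ | ∃ x₀ : X, (∀ n, |B.f n x₀| = ε n) ∧ c = ‖x₀‖}) :
    IsCompact (brick B ε) :=
  stmt13_general X B hbc ε hext hfin
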